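/- For a maximal curve X over F_{q^2} (i.e., #X(F_{q^2}) = q^2 + 1 + 2gq) with genus g > 0, we have g ≤ q(q-1)/2. -/

import Mathlib

/-- Model of a (geometrically irreducible, projective, nonsingular) curve of genus `g`
over `F_{q²}` through its point counts over the extensions `F_{q^{2n}}` and the Weil
conjectures: `count n = q^{2n} + 1 - Σ αᵢⁿ` where the Frobenius eigenvalues `αᵢ` have
absolute value `q`, and point counts are monotone along field extensions. -/
structure CurvePointCounts (q g : ℕ) where
  count : ℕ → ℕ
  α : Fin (2 * g) → ℂ
  habs : ∀ i, ‖α i‖ = q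
  hcount : ∀ n : ℕ, 1 ≤ n → (count n : ℂ) = (q : ℂ) ^ (2 * n) + 1 - ∑ i, α i ^ n
  hmono : ∀ a b : ℕ, 1 ≤ a → a ∣ b → count a ≤ count b

/-- Ihara's bound: if a curve of genus `g > 0` is maximal over `F_{q²}`,
i.e. `#X(F_{q²}) = q² + 1 + 2gq`, then `g ≤ q(q-1)/2`. -/
theorem ihara_bound (q g : ℕ) (hq : 2 ≤ q) (hg : 0 < g) (X : CurvePointCounts q g)
    (hmax : X.count 1 = q ^ 2 + 1 + 2 * g * q) :
    g ≤ q * (q - 1) / 2 := by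
  have h1 := X.hcount 1 le_rfl
  rw [hmax] at h1
  push_cast at h1
  simp only [pow_one, mul_one] at h1
  have hsum : ∑ i, X.α i = -(2 * (g : ℂ) * q) := by linear_combination h1
  -- each eigenvalue equals -q
  have hα : ∀ i, X.α i = -(q : ℂ) := by
    have hnn : ∀ i ∈ Finset.univ, (0 : ℝ) ≤ (X.α i).re + q := by
      intro i _
      have h := Complex.abs_re_le_norm (X.α i)
      rw [X.habs] at h
      have := neg_abs_le (X.α i).re
      linarith
    have hzero : ∑ i, ((X.α i).re + (q : ℝ)) = 0 := by
      have hre : (∑ i, X.α i).re = -(2 * (g : ℝ) * q) := by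
        rw [hsum]; simp
      rw [Complex.re_sum] at hre
      rw [Finset.sum_add_distrib, hre]
      simp
    have heach := (Finset.sum_eq_zero_iff_of_nonneg hnn).mp hzero
    intro i
    have hrei : (X.α i).re = -(q : ℝ) := by
      have := heach i (Finset.mem_univ i)
      linarith
    have himi : (X.α i).im = 0 := by
      have hsq := Complex.sq_norm (X.α i)
      rw [X.habs] at hsq
      rw [Complex.normSq_apply, hrei] at hsq
      nlinarith [sq_nonneg (X.α i).im]
    apply Complex.ext
    · simpa using hrei
    · simpa using himi
  -- count over F_{q^4}
  have h2 := X.hcount 2 (by norm_num)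
  have hsum2 : ∑ i, X.α i ^ 2 = 2 * (g : ℂ) * (q : ℂ) ^ 2 := by
    rw [Finset.sum_congr rfl (fun i _ => by rw [hα i])]
    simp [Finset.sum_const]
  rw [hsum2] at h2
  have hc2 : X.count 2 + 2 * g * q ^ 2 = q ^ 4 + 1 := by
    have : ((X.count 2 + 2 * g * q ^ 2 : ℕ) : ℂ) = ((q ^ 4 + 1 : ℕ) : ℂ) := by
      push_cast
      rw [h2]
      ring
    exact_mod_cast this
  have hmle := X.hmono 1 2 le_rfl (one_dvd 2)
  rw [hmax] at hmle
  -- now pure arithmetic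
  rw [Nat.le_div_iff_mul_le (by norm_num : 0 < 2)]
  obtain ⟨r, rfl⟩ := Nat.exists_eq_add_of_le hq
  have h : (2 + r) ^ 2 + 1 + 2 * g * (2 + r) + 2 * g * (2 + r) ^ 2 ≤ (2 + r) ^ 4 + 1 := by
    omega
  have hsub : 2 + r - 1 = 1 + r := by omega
  rw [hsub]
  nlinarith [h, sq_nonneg r]
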